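/- Let t ≥ 2 and r ≥ 2 be integers and suppose α, β are real numbers with 1/(t+1) < α < 2/(t+1) < β ≤ 3/(t+1), g(α) = g(β), and (t+1)β − 1 ≤ (r−1)·((t+1)α − 1). Then (r−1)/h(α) + 1/h(β) ≤ 0. -/
import Mathlib


/-- `g` is the derivative of `ρ ↦ ρ(1-ρ)^t`. -/
noncomputable def gfun (t : ℕ) (ρ : ℝ) : ℝ := (1 - ρ) ^ (t - 1) * (1 - ((t : ℝ) + 1) * ρ)

/-- `h` is the second derivative of `ρ ↦ ρ(1-ρ)^t`. -/
noncomputable def hfun (t : ℕ) (ρ : ℝ) : ℝ :=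
  (t : ℝ) * (1 - ρ) ^ (t - 2) * (((t : ℝ) + 1) * ρ - 2)

lemma lemA (s : ℕ) (w : ℝ) (hw0 : 0 ≤ w) (hw1 : w ≤ 1) :
    (1+w)^s * (1 - (s:ℝ)*w) ≤ (1-w)^s * (1 + (s:ℝ)*w) := by
  induction s with
  | zero => simp
  | succ n ih =>
    have h1w : (0:ℝ) ≤ 1 - w := by linarith
    have h2w : (0:ℝ) ≤ 1 + w := by linarith
    push_cast
    rcases le_or_gt (1 - ((n:ℝ)+1)*w) 0 with hc | hc
    · have hn0 : (0:ℝ) ≤ (n:ℝ) := Nat.cast_nonneg n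
      have hL : (1+w)^(n+1) * (1 - ((n:ℝ)+1)*w) ≤ 0 :=
        mul_nonpos_of_nonneg_of_nonpos (pow_nonneg h2w _) hc
      have hR : 0 ≤ (1-w)^(n+1) * (1 + ((n:ℝ)+1)*w) :=
        mul_nonneg (pow_nonneg h1w _) (by nlinarith)
      linarith
    · have hnw : (0:ℝ) < 1 - (n:ℝ)*w := by linarith
      have hm : (0:ℝ) ≤ (1+w)*(1 - ((n:ℝ)+1)*w) := mul_nonneg h2w hc.le
      have A := mul_le_mul_of_nonneg_right ih hm
      have hn0 : (0:ℝ) ≤ (n:ℝ) := Nat.cast_nonneg n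
      have poly : (1+w)*(1+(n:ℝ)*w)*(1-((n:ℝ)+1)*w) ≤ (1-w)*(1-(n:ℝ)*w)*(1+((n:ℝ)+1)*w) := by
        nlinarith [mul_nonneg (mul_nonneg hn0 hn0) (mul_nonneg (mul_nonneg hw0 hw0) hw0),
          mul_nonneg hn0 (mul_nonneg (mul_nonneg hw0 hw0) hw0)]
      have B := mul_le_mul_of_nonneg_left poly (pow_nonneg h1w n)
      have final : (1+w)^(n+1)*(1-((n:ℝ)+1)*w) * (1-(n:ℝ)*w)
          ≤ (1-w)^(n+1)*(1+((n:ℝ)+1)*w) * (1-(n:ℝ)*w) := by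
        calc (1+w)^(n+1)*(1-((n:ℝ)+1)*w) * (1-(n:ℝ)*w)
            = (1+w)^n*(1-(n:ℝ)*w) * ((1+w)*(1-((n:ℝ)+1)*w)) := by ring
          _ ≤ (1-w)^n*(1+(n:ℝ)*w) * ((1+w)*(1-((n:ℝ)+1)*w)) := A
          _ = (1-w)^n * ((1+w)*(1+(n:ℝ)*w)*(1-((n:ℝ)+1)*w)) := by ring
          _ ≤ (1-w)^n * ((1-w)*(1-(n:ℝ)*w)*(1+((n:ℝ)+1)*w)) := B
          _ = (1-w)^(n+1)*(1+((n:ℝ)+1)*w) * (1-(n:ℝ)*w) := by ring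
      exact le_of_mul_le_mul_right final hnw

lemma lemB (t : ℕ) (ht : 2 ≤ t) {p q : ℝ} (hp : 0 ≤ p) (hpq : p < q) (hq : q ≤ 1) :
    (1+q)*((t:ℝ)-1-q)^(t-1) < (1+p)*((t:ℝ)-1-p)^(t-1) := by
  have htR : (2:ℝ) ≤ (t:ℝ) := by exact_mod_cast ht
  have anti : StrictAntiOn (fun x : ℝ => (1+x)*((t:ℝ)-1-x)^(t-1)) (Set.Icc 0 1) := by
    apply strictAntiOn_of_deriv_neg (convex_Icc 0 1)
    · exact ((continuous_const.add continuous_id).mul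
        ((continuous_const.sub continuous_id).pow _)).continuousOn
    · intro x hx
      rw [interior_Icc] at hx
      have hd : HasDerivAt (fun y : ℝ => (1+y)*((t:ℝ)-1-y)^(t-1))
          (1*((t:ℝ)-1-x)^(t-1) + (1+x)*(((t-1:ℕ):ℝ)*((t:ℝ)-1-x)^(t-1-1)*(-1))) x := by
        have h1 : HasDerivAt (fun y : ℝ => 1+y) 1 x := by
          simpa using (hasDerivAt_id x).const_add (1:ℝ)
        have h2 : HasDerivAt (fun y : ℝ => (t:ℝ)-1-y) (-1) x := by
          simpa using (hasDerivAt_id x).const_sub ((t:ℝ)-1)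
        exact h1.mul (h2.pow (t-1))
      rw [hd.deriv]
      have hc : (0:ℝ) < (t:ℝ)-1-x := by linarith [hx.2]
      have hkey : ((t:ℝ)-1-x)^(t-1) = ((t:ℝ)-1-x)^(t-2) * ((t:ℝ)-1-x) := by
        rw [← pow_succ]; congr 1; omega
      have hcast : ((t-1:ℕ):ℝ) = (t:ℝ)-1 := by
        rw [Nat.cast_sub (by omega)]; norm_num
      have he : t-1-1 = t-2 := by omega
      rw [hkey, hcast, he]
      have hD : (0:ℝ) < ((t:ℝ)-1-x)^(t-2) := pow_pos hc _
      nlinarith [mul_pos (mul_pos hD hx.1) (by linarith : (0:ℝ) < (t:ℝ))]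
  have h1 : p ∈ Set.Icc (0:ℝ) 1 := ⟨hp, by linarith⟩
  have h2 : q ∈ Set.Icc (0:ℝ) 1 := ⟨by linarith, hq⟩
  simpa using anti h1 h2 hpq

set_option maxHeartbeats 1000000 in
/-- Lemma 3.9. -/
theorem derivative_of_L_nonpositive (t r : ℕ) (ht : 2 ≤ t) (hr : 2 ≤ r) (α β : ℝ)
    (hα1 : 1 / ((t : ℝ) + 1) < α) (hα2 : α < 2 / ((t : ℝ) + 1))
    (hβ1 : 2 / ((t : ℝ) + 1) < β) (hβ2 : β ≤ 3 / ((t : ℝ) + 1))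
    (hg : gfun t α = gfun t β)
    (hkey : ((t : ℝ) + 1) * β - 1 ≤ ((r : ℝ) - 1) * (((t : ℝ) + 1) * α - 1)) :
    ((r : ℝ) - 1) / hfun t α + 1 / hfun t β ≤ 0 := by
  have htR : (2:ℝ) ≤ (t:ℝ) := by exact_mod_cast ht
  have hrR : (2:ℝ) ≤ (r:ℝ) := by exact_mod_cast hr
  have hT : (0:ℝ) < (t:ℝ)+1 := by linarith
  have hα1' : 1 < α*((t:ℝ)+1) := (div_lt_iff₀ hT).mp hα1
  have hα2' : α*((t:ℝ)+1) < 2 := (lt_div_iff₀ hT).mp hα2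
  have hβ1' : 2 < β*((t:ℝ)+1) := (div_lt_iff₀ hT).mp hβ1
  have hβ2' : β*((t:ℝ)+1) ≤ 3 := (le_div_iff₀ hT).mp hβ2
  set u : ℝ := 2 - ((t:ℝ)+1)*α with hu_def
  set v : ℝ := ((t:ℝ)+1)*β - 2 with hv_def
  have hu0 : 0 < u := by rw [hu_def]; nlinarith
  have hu1 : u < 1 := by rw [hu_def]; nlinarith
  have hv0 : 0 < v := by rw [hv_def]; nlinarith
  have hv1 : v ≤ 1 := by rw [hv_def]; nlinarith
  have hxpos : (0:ℝ) < 1 - α := by nlinarith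
  have hynn : (0:ℝ) ≤ 1 - β := by nlinarith
  simp only [gfun] at hg
  have hg1 : (1-α)^(t-1)*(1-u) = (1-β)^(t-1)*(1+v) := by
    rw [hu_def, hv_def]; linear_combination -hg
  have hypos : (0:ℝ) < 1 - β := by
    rcases hynn.lt_or_eq with h | h
    · exact h
    · exfalso
      have hz : (1:ℝ)-β = 0 := h.symm
      have h0 : (1-α)^(t-1)*(1-u) = 0 := by
        rw [hg1, hz, zero_pow (by omega : t-1 ≠ 0), zero_mul]
      have hXp : 0 < (1-α)^(t-1) := pow_pos hxpos _
      nlinarith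
  have hcast : ((t-1:ℕ):ℝ) = (t:ℝ)-1 := by rw [Nat.cast_sub (by omega)]; norm_num
  have htm1 : (0:ℝ) < (t:ℝ)-1 := by linarith
  have hw0 : 0 ≤ u/((t:ℝ)-1) := div_nonneg hu0.le htm1.le
  have hw1 : u/((t:ℝ)-1) ≤ 1 := by rw [div_le_one htm1]; linarith
  have hA := lemA (t-1) (u/((t:ℝ)-1)) hw0 hw1
  rw [hcast] at hA
  have hsw : ((t:ℝ)-1)*(u/((t:ℝ)-1)) = u := by field_simp
  rw [hsw] at hA
  have hA2 : ((t:ℝ)-1+u)^(t-1)*(1-u) ≤ ((t:ℝ)-1-u)^(t-1)*(1+u) := by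
    have e1 : ((t:ℝ)-1+u) = ((t:ℝ)-1)*(1+u/((t:ℝ)-1)) := by field_simp
    have e2 : ((t:ℝ)-1-u) = ((t:ℝ)-1)*(1-u/((t:ℝ)-1)) := by field_simp
    rw [e1, e2, mul_pow, mul_pow, mul_assoc, mul_assoc]
    exact mul_le_mul_of_nonneg_left hA (pow_nonneg htm1.le (t-1))
  have hxe : ((t:ℝ)+1)*(1-α) = (t:ℝ)-1+u := by rw [hu_def]; ring
  have hye : ((t:ℝ)+1)*(1-β) = (t:ℝ)-1-v := by rw [hv_def]; ring
  have hg2 : ((t:ℝ)-1+u)^(t-1)*(1-u) = ((t:ℝ)-1-v)^(t-1)*(1+v) := by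
    calc ((t:ℝ)-1+u)^(t-1)*(1-u) = (((t:ℝ)+1)*(1-α))^(t-1)*(1-u) := by rw [hxe]
      _ = ((t:ℝ)+1)^(t-1) * ((1-α)^(t-1)*(1-u)) := by rw [mul_pow]; ring
      _ = ((t:ℝ)+1)^(t-1) * ((1-β)^(t-1)*(1+v)) := by rw [hg1]
      _ = (((t:ℝ)+1)*(1-β))^(t-1)*(1+v) := by rw [mul_pow]; ring
      _ = ((t:ℝ)-1-v)^(t-1)*(1+v) := by rw [hye]
  have huv : u ≤ v := by
    by_contra hcon
    push_neg at hcon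
    have hlt := lemB t ht hv0.le hcon hu1.le
    linarith [hA2, hg2, hlt]
  have hkk : 1+v ≤ ((r:ℝ)-1)*(1-u) := by rw [hu_def, hv_def]; nlinarith [hkey]
  have hXp : 0 < (1-α)^(t-1) := pow_pos hxpos _
  have hYp : 0 < (1-β)^(t-1) := pow_pos hypos _
  have hi : (1-α)^(t-1) ≤ ((r:ℝ)-1)*(1-β)^(t-1) := by
    have h1u : (0:ℝ) < 1-u := by linarith
    have step := mul_le_mul_of_nonneg_left hkk hYp.le
    nlinarith [hg1, step, h1u]
  have hii : (1-β)*u ≤ (1-α)*v := by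
    have h3 : ((t:ℝ)-1-v)*u ≤ ((t:ℝ)-1+u)*v := by
      nlinarith [mul_nonneg (by linarith : (0:ℝ) ≤ (t:ℝ)-1) (sub_nonneg.mpr huv),
        mul_pos hu0 hv0]
    have h4 : ((t:ℝ)+1)*((1-β)*u) ≤ ((t:ℝ)+1)*((1-α)*v) := by
      calc ((t:ℝ)+1)*((1-β)*u) = (((t:ℝ)+1)*(1-β))*u := by ring
        _ = ((t:ℝ)-1-v)*u := by rw [hye]
        _ ≤ ((t:ℝ)-1+u)*v := h3
        _ = (((t:ℝ)+1)*(1-α))*v := by rw [hxe]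
        _ = ((t:ℝ)+1)*((1-α)*v) := by ring
    exact le_of_mul_le_mul_left h4 hT
  have e1 : (1-α)^(t-1) = (1-α)^(t-2)*(1-α) := by rw [← pow_succ]; congr 1; omega
  have e2 : (1-β)^(t-1) = (1-β)^(t-2)*(1-β) := by rw [← pow_succ]; congr 1; omega
  rw [e1, e2] at hi
  have hp2a : 0 < (1-α)^(t-2) := pow_pos hxpos _
  have hp2b : 0 < (1-β)^(t-2) := pow_pos hypos _
  have hr1 : (0:ℝ) ≤ (r:ℝ)-1 := by linarith
  have s1 := mul_le_mul_of_nonneg_right hi hu0.le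
  have s2 := mul_le_mul_of_nonneg_left hii (mul_nonneg hr1 hp2b.le)
  have main0 : (1-α)^(t-2)*u ≤ ((r:ℝ)-1)*((1-β)^(t-2)*v) := by
    nlinarith [s1, s2, hxpos]
  have hAval : hfun t α = -((t:ℝ)*((1-α)^(t-2)*u)) := by
    simp only [hfun]; rw [hu_def]; ring
  have hBval : hfun t β = (t:ℝ)*((1-β)^(t-2)*v) := by
    simp only [hfun]; rw [hv_def]; ring
  have ht0 : (0:ℝ) < (t:ℝ) := by linarith
  have hPpos : 0 < (t:ℝ)*((1-α)^(t-2)*u) := mul_pos ht0 (mul_pos hp2a hu0)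
  have hQpos : 0 < (t:ℝ)*((1-β)^(t-2)*v) := mul_pos ht0 (mul_pos hp2b hv0)
  have hmain := mul_le_mul_of_nonneg_left main0 ht0.le
  rw [hAval, hBval]
  rw [div_add_div _ _ (neg_ne_zero.mpr hPpos.ne') hQpos.ne']
  rw [div_nonpos_iff]
  left
  constructor
  · linarith [hmain]
  · linarith [mul_pos hPpos hQpos]
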